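/- arXiv:1706.06883 — 4 statements merged into one kernel-verified Lean document; each statement's English description precedes it below -/
import Mathlib

section
/- Let θ > 0, μ > 0, ϱ = θ - √(π/2)·μ⁻¹ ≥ 0, ϑ = θ + √(π/2)·μ⁻¹, and let X be an exponential random variable with mean 1 (density f(x) = e^{-x} for x ≥ 0). Define K(t) = 1 for t ≤ ϱ, K(t) = 1/2 - (μ/√(2π))(t - θ) for ϱ < t < ϑ, and K(t) = 0 for t ≥ ϑ. Then E[K(X)] = 1 - (μ/√(2π)) · e^{-θ} · (e^{√(π/(2μ²))} - e^{-√(π/(2μ²))}). -/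
/-! The slope `μ/√(2π)` of `K` is `1/(ϑ - ϱ)`, so `K` is the linear ramp falling from `1` at `ϱ`
to `0` at `ϑ`. Integrating against `e^{-x}`, the flat part contributes `1 - e^{-ϱ}` and the sloped
part is integrated through the antiderivative `(1 + x - c) e^{-x}` of `(c - x) e^{-x}`, which gives
`E[K(X)] = 1 - (e^{-ϱ} - e^{-ϑ})/(ϑ - ϱ)`; with `ϱ, ϑ = θ ∓ √(π/2)/μ` this is the closed form. -/

open Real MeasureTheory Set

noncomputable def ramp (a b t : ℝ) : ℝ :=
  if t ≤ a then 1 else if t < b then (b - t) / (b - a) else 0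

theorem intervalIntegral_exp_neg (a b : ℝ) :
    ∫ x in a..b, exp (-x) = exp (-a) - exp (-b) := by
  rw [intervalIntegral.integral_comp_neg (fun x => exp x), integral_exp]

theorem intervalIntegral_sub_mul_exp_neg (a b c : ℝ) :
    ∫ x in a..b, (c - x) * exp (-x) = (1 + b - c) * exp (-b) - (1 + a - c) * exp (-a) := by
  have hderiv : ∀ x ∈ uIcc a b,
      HasDerivAt (fun t => (1 + t - c) * exp (-t)) ((c - x) * exp (-x)) x := fun x _ => by
    have hexp := (hasDerivAt_neg x).exp
    exact ((((hasDerivAt_id' x).const_add 1).sub_const c).mul hexp).congr_deriv (by ring)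
  exact intervalIntegral.integral_eq_sub_of_hasDerivAt hderiv
    ((by fun_prop : Continuous fun x => (c - x) * exp (-x)).intervalIntegrable a b)

theorem integral_Ioi_zero_ramp_mul_exp_neg {a b : ℝ} (ha : 0 ≤ a) (hab : a < b) :
    ∫ x in Ioi 0, ramp a b x * exp (-x) = 1 - (exp (-a) - exp (-b)) / (b - a) := by
  have hba : b - a ≠ 0 := (sub_pos.2 hab).ne'
  have hlow : EqOn (fun x => ramp a b x * exp (-x)) (fun x => exp (-x)) (uIcc 0 a) := by
    intro x hx
    rw [uIcc_of_le ha] at hx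
    simp [ramp, hx.2]
  have hmid : EqOn (fun x => ramp a b x * exp (-x)) (fun x => (b - x) / (b - a) * exp (-x))
      (uIcc a b) := by
    intro x hx
    rw [uIcc_of_le hab.le] at hx
    rcases hx.1.eq_or_lt with rfl | hax
    · simp [ramp, div_self hba]
    rcases hx.2.eq_or_lt with rfl | hxb
    · simp [ramp, hax.not_ge]
    · simp [ramp, hax.not_ge, hxb]
  have hhigh : ∀ x ∈ Ioi 0 \ Ioc 0 b, ramp a b x * exp (-x) = 0 := by
    rintro x ⟨hx0, hx⟩
    have hbx : b < x := lt_of_not_ge fun hxb => hx ⟨hx0, hxb⟩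
    simp [ramp, (hab.trans hbx).not_ge, hbx.not_gt]
  have hint_low : IntervalIntegrable (fun x => ramp a b x * exp (-x)) volume 0 a :=
    (intervalIntegrable_congr (hlow.mono uIoc_subset_uIcc)).2
      ((by fun_prop : Continuous fun x => exp (-x)).intervalIntegrable 0 a)
  have hint_mid : IntervalIntegrable (fun x => ramp a b x * exp (-x)) volume a b :=
    (intervalIntegrable_congr (hmid.mono uIoc_subset_uIcc)).2
      ((by fun_prop : Continuous fun x => (b - x) / (b - a) * exp (-x)).intervalIntegrable a b)
  rw [setIntegral_eq_of_subset_of_forall_sdiff_eq_zero measurableSet_Ioi Ioc_subset_Ioi_self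
      hhigh, ← intervalIntegral.integral_of_le (ha.trans hab.le),
    ← intervalIntegral.integral_add_adjacent_intervals hint_low hint_mid,
    intervalIntegral.integral_congr hlow, intervalIntegral.integral_congr hmid]
  simp only [div_mul_eq_mul_div, intervalIntegral.integral_div, intervalIntegral_exp_neg,
    intervalIntegral_sub_mul_exp_neg, neg_zero, exp_zero]
  field_simp
  ring

theorem outage_closed_form_unit_mean_general
    (θ μ ϱ ϑ : ℝ) (hμ : 0 < μ)
    (hϱ : ϱ = θ - Real.sqrt (π / 2) * μ⁻¹)
    (hϑ : ϑ = θ + Real.sqrt (π / 2) * μ⁻¹)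
    (hϱ0 : 0 ≤ ϱ)
    (K : ℝ → ℝ)
    (hK : ∀ t, K t = if t ≤ ϱ then 1
        else if t < ϑ then 1 / 2 - μ / Real.sqrt (2 * π) * (t - θ) else 0) :
    ∫ x in Set.Ioi (0:ℝ), K x * Real.exp (-x)
      = 1 - μ / Real.sqrt (2 * π) * Real.exp (-θ) *
          (Real.exp (Real.sqrt (π / (2 * μ ^ 2))) - Real.exp (-Real.sqrt (π / (2 * μ ^ 2)))) := by
  set s := √(π / 2) * μ⁻¹ with hs_def
  have hs : 0 < s := by positivity
  have hslope : μ / √(2 * π) = (2 * s)⁻¹ := by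
    rw [show 2 * π = 2 ^ 2 * (π / 2) by ring, sqrt_mul (by positivity), sqrt_sq zero_le_two,
      hs_def]
    field_simp
  have hsqrt : √(π / (2 * μ ^ 2)) = s := by
    rw [div_mul_eq_div_div, sqrt_div' _ (sq_nonneg μ), sqrt_sq hμ.le, div_eq_mul_inv]
  subst hϱ hϑ
  have hK_ramp : K = ramp (θ - s) (θ + s) := funext fun t => by
    rw [hK, ramp, hslope, show θ + s - (θ - s) = 2 * s by ring]
    congr 2
    field_simp
    ring
  rw [hK_ramp, integral_Ioi_zero_ramp_mul_exp_neg hϱ0 (by linarith), hsqrt, hslope,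
    show -(θ - s) = -θ + s by ring, show -(θ + s) = -θ + -s by ring, exp_add, exp_add,
    show θ + s - (θ - s) = 2 * s by ring]
  field_simp

/-- Closed-form single-link finite-blocklength outage probability: if `X` is exponential
with mean `1` (density `e^{-x}` on `x ≥ 0`) and `K` is the linearized Q-function, then
`E[K(X)] = 1 - (μ/√(2π)) e^{-θ} (e^{√(π/(2μ²))} - e^{-√(π/(2μ²))})`. -/
theorem outage_closed_form_unit_mean
    (θ μ ϱ ϑ : ℝ) (hθ : 0 < θ) (hμ : 0 < μ)
    (hϱ : ϱ = θ - Real.sqrt (π / 2) * μ⁻¹)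
    (hϑ : ϑ = θ + Real.sqrt (π / 2) * μ⁻¹)
    (hϱ0 : 0 ≤ ϱ)
    (K : ℝ → ℝ)
    (hK : ∀ t, K t = if t ≤ ϱ then 1
        else if t < ϑ then 1 / 2 - μ / Real.sqrt (2 * π) * (t - θ) else 0) :
    ∫ x in Set.Ioi (0:ℝ), K x * Real.exp (-x)
      = 1 - μ / Real.sqrt (2 * π) * Real.exp (-θ) *
          (Real.exp (Real.sqrt (π / (2 * μ ^ 2))) - Real.exp (-Real.sqrt (π / (2 * μ ^ 2)))) :=
  outage_closed_form_unit_mean_general θ μ ϱ ϑ hμ hϱ hϑ hϱ0 K hK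
end

section
/- Let Z and Y be independent exponential random variables with means Ω_Z ≠ Ω_Y, W = Z + Y, and let K be the piecewise-linear function K(t) = 1 for t ≤ ϱ, K(t) = 1/2 - (μ/√(2π))(t - θ) for ϱ < t < ϑ, K(t) = 0 for t ≥ ϑ, where θ > 0, μ > 0, ϱ = θ - √(π/2)μ⁻¹ ≥ 0, ϑ = θ + √(π/2)μ⁻¹. Then E[K(W)] = (1/(Ω_Z - Ω_Y))·[Ω_Z - Ω_Y + Ω_Z e^{-ϑ/Ω_Z}λ₁ + Ω_Z e^{-ϱ/Ω_Z}λ₂ + Ω_Y e^{-ϑ/Ω_Y}λ₃ + Ω_Y e^{-ϱ/Ω_Y}λ₄], where λ₁ = (μϑ + μΩ_Z - μθ)/√(2π) - 1/2, λ₂ = (μθ - μϱ - μΩ_Z)/√(2π) - 1/2, λ₃ = 1/2 - (μϑ + μΩ_Y - μθ)/√(2π), λ₄ = 1/2 + (μϱ + μΩ_Y - μθ)/√(2π). -/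
/-!
The ramp `K` equals `c ((ϑ - t)⁺ - (ϱ - t)⁺)` with `c = μ / √(2π) = 1 / (ϑ - ϱ)`. Splitting the
density into its two exponentials, `E[K(W)]` becomes a combination of the transforms
`∫₀^∞ (s - w)⁺ e^{-w/Ω} dw = Ω s - Ω² + Ω² e^{-s/Ω}` at `s ∈ {ϱ, ϑ}`, `Ω ∈ {Ω_Z, Ω_Y}`; since
`c (ϑ - θ) = c (θ - ϱ) = 1/2`, the `λᵢ` reduce to `± c Ω`, and the closed form follows.
-/

open Real MeasureTheory Set

lemma sqrt_two_mul_pi : √(2 * π) = 2 * √(π / 2) := by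
  rw [show 2 * π = 2 ^ 2 * (π / 2) by ring, sqrt_mul (by positivity), sqrt_sq zero_le_two]

lemma div_sqrt_two_mul_pi_mul_sqrt_pi_div_two {μ : ℝ} (hμ : μ ≠ 0) :
    μ / √(2 * π) * (√(π / 2) * μ⁻¹) = 1 / 2 := by
  have : 0 < √(π / 2) := sqrt_pos.mpr (by positivity)
  rw [sqrt_two_mul_pi]
  field_simp

lemma ramp_eq_mul_sub_max {m δ c : ℝ} (hδ : 0 ≤ δ) (hcδ : c * δ = 1 / 2) (t : ℝ) :
    (if t ≤ m - δ then 1 else if t < m + δ then 1 / 2 - c * (t - m) else 0)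
      = c * (max (m + δ - t) 0 - max (m - δ - t) 0) := by
  split_ifs with h₁ h₂
  · rw [max_eq_left (by linarith), max_eq_left (by linarith)]
    linear_combination -2 * hcδ
  · rw [max_eq_left (by linarith), max_eq_right (by linarith)]
    linear_combination -hcδ
  · rw [max_eq_right (by linarith), max_eq_right (by linarith)]
    ring

lemma max_sub_mul_exp_eq_zero_of_mem_diff {s Ω w : ℝ} (hw : w ∈ Ioi 0 \ Ioc 0 s) :
    max (s - w) 0 * exp (-w / Ω) = 0 := by
  have hsw : s < w := lt_of_not_ge fun h => hw.2 ⟨hw.1, h⟩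
  rw [max_eq_right (by linarith), zero_mul]

lemma integrableOn_Ioi_max_sub_mul_exp (s Ω : ℝ) :
    IntegrableOn (fun w => max (s - w) 0 * exp (-w / Ω)) (Ioi 0) :=
  ((by fun_prop : Continuous fun w => max (s - w) 0 * exp (-w / Ω)).integrableOn_Icc.mono_set
    Ioc_subset_Icc_self).of_forall_sdiff_eq_zero measurableSet_Ioi
    fun _ => max_sub_mul_exp_eq_zero_of_mem_diff

lemma hasDerivAt_antideriv_sub_mul_exp {s Ω : ℝ} (hΩ : Ω ≠ 0) (w : ℝ) :
    HasDerivAt (fun w => (Ω ^ 2 - Ω * (s - w)) * exp (-w / Ω)) ((s - w) * exp (-w / Ω)) w := by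
  have hlin : HasDerivAt (fun w => Ω ^ 2 - Ω * (s - w)) Ω w := by
    simpa using (((hasDerivAt_id w).const_sub s).const_mul Ω).const_sub (Ω ^ 2)
  have hexp : HasDerivAt (fun w => exp (-w / Ω)) (exp (-w / Ω) * (-1 / Ω)) w :=
    ((hasDerivAt_id w).neg.div_const Ω).exp
  refine (hlin.mul hexp).congr_deriv ?_
  field_simp
  ring

lemma integral_Ioi_max_sub_mul_exp {s Ω : ℝ} (hs : 0 ≤ s) (hΩ : Ω ≠ 0) :
    ∫ w in Ioi 0, max (s - w) 0 * exp (-w / Ω) = Ω * s - Ω ^ 2 + Ω ^ 2 * exp (-s / Ω) := by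
  have hpos : EqOn (fun w => max (s - w) 0 * exp (-w / Ω)) (fun w => (s - w) * exp (-w / Ω))
      (Ioc 0 s) := fun w hw => by simp only [max_eq_left (sub_nonneg.mpr hw.2)]
  rw [setIntegral_eq_of_subset_of_forall_sdiff_eq_zero measurableSet_Ioi Ioc_subset_Ioi_self
    fun _ => max_sub_mul_exp_eq_zero_of_mem_diff, setIntegral_congr_fun measurableSet_Ioc hpos,
    ← intervalIntegral.integral_of_le hs,
    intervalIntegral.integral_eq_sub_of_hasDerivAt
      (fun w _ => hasDerivAt_antideriv_sub_mul_exp hΩ w)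
      ((by fun_prop : Continuous fun w => (s - w) * exp (-w / Ω)).intervalIntegrable _ _)]
  simp only [sub_self, mul_zero, sub_zero, neg_zero, zero_div, exp_zero, mul_one]
  ring

lemma integrableOn_Ioi_ramp_mul_exp (a b c Ω : ℝ) :
    IntegrableOn (fun w => c * (max (b - w) 0 - max (a - w) 0) * exp (-w / Ω)) (Ioi 0) := by
  simp_rw [mul_assoc, sub_mul]
  exact ((integrableOn_Ioi_max_sub_mul_exp b Ω).sub
    (integrableOn_Ioi_max_sub_mul_exp a Ω)).const_mul c

lemma integral_Ioi_ramp_mul_exp {a b c Ω : ℝ} (ha : 0 ≤ a) (hb : 0 ≤ b) (hΩ : Ω ≠ 0) :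
    ∫ w in Ioi 0, c * (max (b - w) 0 - max (a - w) 0) * exp (-w / Ω)
      = c * (Ω * (b - a) + Ω ^ 2 * (exp (-b / Ω) - exp (-a / Ω))) := by
  simp_rw [mul_assoc, sub_mul]
  rw [integral_const_mul, integral_sub (integrableOn_Ioi_max_sub_mul_exp b Ω)
    (integrableOn_Ioi_max_sub_mul_exp a Ω), integral_Ioi_max_sub_mul_exp hb hΩ,
    integral_Ioi_max_sub_mul_exp ha hΩ]
  ring

theorem mrc_outage_closed_form_distinct_general
    (θ μ ϱ ϑ ΩZ ΩY : ℝ) (hμ : 0 < μ)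
    (hZ : 0 < ΩZ) (hY : 0 < ΩY)
    (hϱ : ϱ = θ - Real.sqrt (π / 2) * μ⁻¹)
    (hϑ : ϑ = θ + Real.sqrt (π / 2) * μ⁻¹)
    (hϱ0 : 0 ≤ ϱ)
    (K : ℝ → ℝ)
    (hK : ∀ t, K t = if t ≤ ϱ then 1
        else if t < ϑ then 1 / 2 - μ / Real.sqrt (2 * π) * (t - θ) else 0)
    (lam₁ lam₂ lam₃ lam₄ : ℝ)
    (hlam₁ : lam₁ = (μ * ϑ + μ * ΩZ - μ * θ) / Real.sqrt (2 * π) - 1 / 2)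
    (hlam₂ : lam₂ = (μ * θ - μ * ϱ - μ * ΩZ) / Real.sqrt (2 * π) - 1 / 2)
    (hlam₃ : lam₃ = 1 / 2 - (μ * ϑ + μ * ΩY - μ * θ) / Real.sqrt (2 * π))
    (hlam₄ : lam₄ = 1 / 2 + (μ * ϱ + μ * ΩY - μ * θ) / Real.sqrt (2 * π)) :
    ∫ w in Set.Ioi (0:ℝ),
        K w * ((Real.exp (-w / ΩZ) - Real.exp (-w / ΩY)) / (ΩZ - ΩY))
      = (1 / (ΩZ - ΩY)) *
          (ΩZ - ΩY + ΩZ * Real.exp (-ϑ / ΩZ) * lam₁ + ΩZ * Real.exp (-ϱ / ΩZ) * lam₂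
            + ΩY * Real.exp (-ϑ / ΩY) * lam₃ + ΩY * Real.exp (-ϱ / ΩY) * lam₄) := by
  set c := μ / √(2 * π)
  set δ := √(π / 2) * μ⁻¹
  have hcδ : c * δ = 1 / 2 := div_sqrt_two_mul_pi_mul_sqrt_pi_div_two hμ.ne'
  have hcϑ : c * (ϑ - θ) = 1 / 2 := by rw [hϑ, add_sub_cancel_left, hcδ]
  have hcϱ : c * (θ - ϱ) = 1 / 2 := by rw [hϱ, sub_sub_cancel, hcδ]
  have hϑ0 : 0 ≤ ϑ := by linarith [show 0 ≤ δ by positivity]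
  have hK' : K = fun w => c * (max (ϑ - w) 0 - max (ϱ - w) 0) := by
    ext w; rw [hK, hϱ, hϑ]; exact ramp_eq_mul_sub_max (by positivity) hcδ w
  have hint : ∀ Ω, IntegrableOn (fun w => K w * exp (-w / Ω)) (Ioi 0) := fun Ω => by
    simpa only [hK'] using integrableOn_Ioi_ramp_mul_exp ϱ ϑ c Ω
  have hL : ∀ Ω ≠ 0, ∫ w in Ioi 0, K w * exp (-w / Ω)
      = Ω + c * Ω ^ 2 * (exp (-ϑ / Ω) - exp (-ϱ / Ω)) := fun Ω hΩ => by
    rw [hK', integral_Ioi_ramp_mul_exp hϱ0 hϑ0 hΩ]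
    linear_combination Ω * (hcϑ + hcϱ)
  have hl₁ : lam₁ = c * ΩZ := by rw [hlam₁]; linear_combination hcϑ
  have hl₂ : lam₂ = -(c * ΩZ) := by rw [hlam₂]; linear_combination hcϱ
  have hl₃ : lam₃ = -(c * ΩY) := by rw [hlam₃]; linear_combination -hcϑ
  have hl₄ : lam₄ = c * ΩY := by rw [hlam₄]; linear_combination -hcϱ
  simp_rw [mul_div_assoc', mul_sub]
  rw [integral_div, integral_sub (hint ΩZ) (hint ΩY), hL ΩZ hZ.ne', hL ΩY hY.ne',
    hl₁, hl₂, hl₃, hl₄]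
  ring

/-- Closed-form MRC outage (unequal average SNR case): `E[K(W)]`, where `W` has the
density of a sum of independent exponentials with distinct means `Ω_Z ≠ Ω_Y`, equals the
closed-form expression with coefficients `lam₁, lam₂, lam₃, lam₄`. -/
theorem mrc_outage_closed_form_distinct
    (θ μ ϱ ϑ ΩZ ΩY : ℝ) (hθ : 0 < θ) (hμ : 0 < μ)
    (hZ : 0 < ΩZ) (hY : 0 < ΩY) (hne : ΩZ ≠ ΩY)
    (hϱ : ϱ = θ - Real.sqrt (π / 2) * μ⁻¹)
    (hϑ : ϑ = θ + Real.sqrt (π / 2) * μ⁻¹)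
    (hϱ0 : 0 ≤ ϱ)
    (K : ℝ → ℝ)
    (hK : ∀ t, K t = if t ≤ ϱ then 1
        else if t < ϑ then 1 / 2 - μ / Real.sqrt (2 * π) * (t - θ) else 0)
    (lam₁ lam₂ lam₃ lam₄ : ℝ)
    (hlam₁ : lam₁ = (μ * ϑ + μ * ΩZ - μ * θ) / Real.sqrt (2 * π) - 1 / 2)
    (hlam₂ : lam₂ = (μ * θ - μ * ϱ - μ * ΩZ) / Real.sqrt (2 * π) - 1 / 2)
    (hlam₃ : lam₃ = 1 / 2 - (μ * ϑ + μ * ΩY - μ * θ) / Real.sqrt (2 * π))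
    (hlam₄ : lam₄ = 1 / 2 + (μ * ϱ + μ * ΩY - μ * θ) / Real.sqrt (2 * π)) :
    ∫ w in Set.Ioi (0:ℝ),
        K w * ((Real.exp (-w / ΩZ) - Real.exp (-w / ΩY)) / (ΩZ - ΩY))
      = (1 / (ΩZ - ΩY)) *
          (ΩZ - ΩY + ΩZ * Real.exp (-ϑ / ΩZ) * lam₁ + ΩZ * Real.exp (-ϱ / ΩZ) * lam₂
            + ΩY * Real.exp (-ϑ / ΩY) * lam₃ + ΩY * Real.exp (-ϱ / ΩY) * lam₄) :=
  mrc_outage_closed_form_distinct_general θ μ ϱ ϑ ΩZ ΩY hμ hZ hY hϱ hϑ hϱ0 K hK lam₁ lam₂ lam₃ lam₄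
    hlam₁ hlam₂ hlam₃ hlam₄
end

section
/- Let Z and Y be independent exponential random variables, both with mean Ω > 0, W = Z + Y (so W has density (w/Ω²)e^{-w/Ω}), and let K be the piecewise-linear function as above with parameters θ > 0, μ > 0, ϱ = θ - √(π/2)μ⁻¹ ≥ 0, ϑ = θ + √(π/2)μ⁻¹. Then E[K(W)] = 1 - (e^{-ϱ/Ω} + e^{-ϑ/Ω})/2 - (ϱ e^{-ϱ/Ω})/Ω + (ϱ e^{-ϱ/Ω} - ϑ e^{-ϑ/Ω})/(2Ω) + (μθ(e^{-ϱ/Ω} - e^{-ϑ/Ω}))/√(2π) + (2μξ)/√(2π) + (μτ)/(Ω√(2π)), where τ = ϑ²e^{-ϑ/Ω} - ϱ²e^{-ϱ/Ω} - θϑe^{-ϑ/Ω} + θϱe^{-ϱ/Ω} and ξ = ϑe^{-ϑ/Ω} - ϱe^{-ϱ/Ω} + Ωe^{-ϑ/Ω} - Ωe^{-ϱ/Ω}. -/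
/-!
`K` is `1` on `(0, ϱ]`, affine on `(ϱ, ϑ)` and `0` from `ϑ` on, so `E[K(W)]` is the sum of two
integrals of an affine function against the Gamma(2, Ω) density `w e^{-w/Ω} / Ω²`. Both have the
elementary antiderivative `-e^{-w/Ω} (p (w + Ω) + q (w² + 2Ωw + 2Ω²)) / Ω` for the multiplier
`p + q w`; evaluating it at `0, ϱ, ϑ` and regrouping gives the closed form.
-/

open Real MeasureTheory Set

theorem setIntegral_Ioi_zero_ite_ite {g h : ℝ → ℝ} {a b : ℝ} (ha : 0 ≤ a) (hab : a ≤ b)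
    (hg : IntervalIntegrable g volume 0 a) (hh : IntervalIntegrable h volume a b) :
    ∫ w in Ioi 0, (if w ≤ a then g w else if w < b then h w else 0)
      = (∫ w in 0..a, g w) + ∫ w in a..b, h w := by
  have hg' : Integrable ((Ioc 0 a).indicator g) :=
    ((intervalIntegrable_iff_integrableOn_Ioc_of_le ha).mp hg).integrable_indicator
      measurableSet_Ioc
  have hh' : Integrable ((Ioo a b).indicator h) :=
    (((intervalIntegrable_iff_integrableOn_Ioc_of_le hab).mp hh).mono_set
      Ioo_subset_Ioc_self).integrable_indicator measurableSet_Ioo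
  have hpieces : EqOn (fun w => if w ≤ a then g w else if w < b then h w else 0)
      (fun w => (Ioc 0 a).indicator g w + (Ioo a b).indicator h w) (Ioi 0) := by
    intro w (hw : 0 < w)
    simp only [indicator, mem_Ioc, mem_Ioo]
    split_ifs <;> grind
  rw [setIntegral_congr_fun measurableSet_Ioi hpieces,
    integral_add hg'.integrableOn hh'.integrableOn,
    setIntegral_indicator measurableSet_Ioc, setIntegral_indicator measurableSet_Ioo,
    inter_eq_right.mpr Ioc_subset_Ioi_self,
    inter_eq_right.mpr (Ioo_subset_Ioi_self.trans (Ioi_subset_Ioi ha)),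
    ← integral_Ioc_eq_integral_Ioo, intervalIntegral.integral_of_le ha,
    intervalIntegral.integral_of_le hab]

theorem hasDerivAt_antideriv_affine_mul_gamma_two_density (p q : ℝ) {Ω : ℝ} (hΩ : Ω ≠ 0)
    (w : ℝ) :
    HasDerivAt
      (fun w => -(exp (-w / Ω) * (p * (w + Ω) + q * (w ^ 2 + 2 * Ω * w + 2 * Ω ^ 2))) / Ω)
      ((p + q * w) * (w / Ω ^ 2 * exp (-w / Ω))) w := by
  have hexp : HasDerivAt (fun w => exp (-w / Ω)) (exp (-w / Ω) * (-1 / Ω)) w :=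
    ((hasDerivAt_id w).neg.div_const Ω).exp
  have hpoly : HasDerivAt (fun w => p * (w + Ω) + q * (w ^ 2 + 2 * Ω * w + 2 * Ω ^ 2))
      (p + q * (2 * w + 2 * Ω)) w := by
    refine ((((hasDerivAt_id' w).add_const Ω).const_mul p).add
      ((((hasDerivAt_pow 2 w).add ((hasDerivAt_id' w).const_mul (2 * Ω))).add_const
        (2 * Ω ^ 2)).const_mul q)).congr_deriv ?_
    ring
  refine ((hexp.mul hpoly).neg.div_const Ω).congr_deriv ?_
  field_simp
  ring

theorem integral_affine_mul_gamma_two_density (p q a b : ℝ) {Ω : ℝ} (hΩ : Ω ≠ 0) :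
    ∫ w in a..b, (p + q * w) * (w / Ω ^ 2 * exp (-w / Ω))
      = (exp (-a / Ω) * (p * (a + Ω) + q * (a ^ 2 + 2 * Ω * a + 2 * Ω ^ 2))
          - exp (-b / Ω) * (p * (b + Ω) + q * (b ^ 2 + 2 * Ω * b + 2 * Ω ^ 2))) / Ω := by
  rw [intervalIntegral.integral_eq_sub_of_hasDerivAt
    (fun w _ => hasDerivAt_antideriv_affine_mul_gamma_two_density p q hΩ w)
    ((by fun_prop : Continuous _).intervalIntegrable _ _)]
  ring

theorem mrc_outage_closed_form_equal_general
    (θ μ ϱ ϑ Ω : ℝ) (hμ : 0 < μ) (hΩ : 0 < Ω)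
    (hϱ : ϱ = θ - Real.sqrt (π / 2) * μ⁻¹)
    (hϑ : ϑ = θ + Real.sqrt (π / 2) * μ⁻¹)
    (hϱ0 : 0 ≤ ϱ)
    (K : ℝ → ℝ)
    (hK : ∀ t, K t = if t ≤ ϱ then 1
        else if t < ϑ then 1 / 2 - μ / Real.sqrt (2 * π) * (t - θ) else 0)
    (τ ξ : ℝ)
    (hτ : τ = ϑ ^ 2 * Real.exp (-ϑ / Ω) - ϱ ^ 2 * Real.exp (-ϱ / Ω)
        - θ * ϑ * Real.exp (-ϑ / Ω) + θ * ϱ * Real.exp (-ϱ / Ω))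
    (hξ : ξ = ϑ * Real.exp (-ϑ / Ω) - ϱ * Real.exp (-ϱ / Ω)
        + Ω * Real.exp (-ϑ / Ω) - Ω * Real.exp (-ϱ / Ω)) :
    ∫ w in Set.Ioi (0:ℝ), K w * (w / Ω ^ 2 * Real.exp (-w / Ω))
      = 1 - (Real.exp (-ϱ / Ω) + Real.exp (-ϑ / Ω)) / 2
          - ϱ * Real.exp (-ϱ / Ω) / Ω
          + (ϱ * Real.exp (-ϱ / Ω) - ϑ * Real.exp (-ϑ / Ω)) / (2 * Ω)
          + μ * θ * (Real.exp (-ϱ / Ω) - Real.exp (-ϑ / Ω)) / Real.sqrt (2 * π)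
          + 2 * μ * ξ / Real.sqrt (2 * π)
          + μ * τ / (Ω * Real.sqrt (2 * π)) := by
  have hϱϑ : ϱ ≤ ϑ := by
    have : 0 ≤ Real.sqrt (π / 2) * μ⁻¹ := by positivity
    linarith
  have hpieces : (fun w => K w * (w / Ω ^ 2 * exp (-w / Ω))) = fun w =>
      if w ≤ ϱ then (1 + 0 * w) * (w / Ω ^ 2 * exp (-w / Ω))
      else if w < ϑ then
        (1 / 2 + μ / √(2 * π) * θ + -(μ / √(2 * π)) * w) * (w / Ω ^ 2 * exp (-w / Ω))
      else 0 := by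
    funext w
    rw [hK]
    split_ifs <;> ring
  rw [hpieces,
    setIntegral_Ioi_zero_ite_ite hϱ0 hϱϑ ((by fun_prop : Continuous _).intervalIntegrable _ _)
      ((by fun_prop : Continuous _).intervalIntegrable _ _),
    integral_affine_mul_gamma_two_density _ _ _ _ hΩ.ne',
    integral_affine_mul_gamma_two_density _ _ _ _ hΩ.ne', hτ, hξ, neg_zero, zero_div, exp_zero]
  field_simp
  ring

/-- Closed-form MRC outage (equal average SNR case): `E[K(W)]` for `W` with the
Gamma(2,Ω) density `(w/Ω²)e^{-w/Ω}` equals the closed-form expression involving `τ` and `ξ`. -/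
theorem mrc_outage_closed_form_equal
    (θ μ ϱ ϑ Ω : ℝ) (hθ : 0 < θ) (hμ : 0 < μ) (hΩ : 0 < Ω)
    (hϱ : ϱ = θ - Real.sqrt (π / 2) * μ⁻¹)
    (hϑ : ϑ = θ + Real.sqrt (π / 2) * μ⁻¹)
    (hϱ0 : 0 ≤ ϱ)
    (K : ℝ → ℝ)
    (hK : ∀ t, K t = if t ≤ ϱ then 1
        else if t < ϑ then 1 / 2 - μ / Real.sqrt (2 * π) * (t - θ) else 0)
    (τ ξ : ℝ)
    (hτ : τ = ϑ ^ 2 * Real.exp (-ϑ / Ω) - ϱ ^ 2 * Real.exp (-ϱ / Ω)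
        - θ * ϑ * Real.exp (-ϑ / Ω) + θ * ϱ * Real.exp (-ϱ / Ω))
    (hξ : ξ = ϑ * Real.exp (-ϑ / Ω) - ϱ * Real.exp (-ϱ / Ω)
        + Ω * Real.exp (-ϑ / Ω) - Ω * Real.exp (-ϱ / Ω)) :
    ∫ w in Set.Ioi (0:ℝ), K w * (w / Ω ^ 2 * Real.exp (-w / Ω))
      = 1 - (Real.exp (-ϱ / Ω) + Real.exp (-ϑ / Ω)) / 2
          - ϱ * Real.exp (-ϱ / Ω) / Ω
          + (ϱ * Real.exp (-ϱ / Ω) - ϑ * Real.exp (-ϑ / Ω)) / (2 * Ω)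
          + μ * θ * (Real.exp (-ϱ / Ω) - Real.exp (-ϑ / Ω)) / Real.sqrt (2 * π)
          + 2 * μ * ξ / Real.sqrt (2 * π)
          + μ * τ / (Ω * Real.sqrt (2 * π)) :=
  mrc_outage_closed_form_equal_general θ μ ϱ ϑ Ω hμ hΩ hϱ hϑ hϱ0 K hK τ ξ hτ hξ
end

section
/- Let ε(Ω) = 1 - (μΩ/√(2π))·e^{-θ/Ω}·(e^{√(π/2)/(μΩ)} - e^{-√(π/2)/(μΩ)}) be the single-link finite-blocklength outage probability with average SNR Ω > 0 and fixed parameters θ > 0, μ > 0. Then ε(Ω) is strictly decreasing in Ω, and ε(Ω) → 0 as Ω → ∞. -/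
open Real Filter Topology Set

/-!
With `c = √(π/2)/μ`, the outage probability is `ε(Ω) = 1 - (2c)⁻¹ ∫_{θ-c}^{θ+c} e^{-s/Ω} ds`.
Because `θ - c ≥ 0`, the integrand grows strictly with `Ω` on the interval of integration, and
the integral depends continuously on `1/Ω`, so as `Ω → ∞` it tends to the length `2c`.
-/

lemma integral_exp_neg_mul (a b t : ℝ) (ht : t ≠ 0) :
    ∫ s in a..b, exp (-(s * t)) = t⁻¹ * (exp (-(a * t)) - exp (-(b * t))) := by
  rw [intervalIntegral.integral_comp_mul_right (fun x => exp (-x)) ht,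
    intervalIntegral.integral_comp_neg, integral_exp, smul_eq_mul]

lemma strictAnti_integral_exp_neg_mul {a b : ℝ} (ha : 0 ≤ a) (hab : a < b) :
    StrictAnti fun t => ∫ s in a..b, exp (-(s * t)) := by
  intro t t' htt'
  have hcont (u : ℝ) : ContinuousOn (fun s => exp (-(s * u))) (Icc a b) := by fun_prop
  refine intervalIntegral.integral_lt_integral_of_continuousOn_of_le_of_exists_lt hab
    (hcont t') (hcont t) (fun s hs => ?_) ⟨b, right_mem_Icc.2 hab.le, ?_⟩
  · have hs0 : 0 ≤ s := ha.trans hs.1.le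
    gcongr
  · have hb : 0 < b := ha.trans_lt hab
    gcongr

lemma tendsto_integral_exp_neg_mul_inv_atTop (a b : ℝ) :
    Tendsto (fun Ω => ∫ s in a..b, exp (-(s * Ω⁻¹))) atTop (𝓝 (b - a)) := by
  have hcont : Continuous fun t => ∫ s in a..b, exp (-(s * t)) :=
    intervalIntegral.continuous_parametric_intervalIntegral_of_continuous' (by fun_prop) a b
  simpa [Function.comp_def] using (hcont.tendsto 0).comp tendsto_inv_atTop_zero

lemma mul_exp_mul_sub_exp_eq_integral (θ c Ω : ℝ) (hΩ : Ω ≠ 0) :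
    Ω * exp (-θ / Ω) * (exp (c / Ω) - exp (-(c / Ω))) =
      ∫ s in θ - c..θ + c, exp (-(s * Ω⁻¹)) := by
  rw [integral_exp_neg_mul _ _ _ (inv_ne_zero hΩ), inv_inv, mul_assoc, mul_sub, ← exp_add,
    ← exp_add]
  congr 4 <;> field_simp <;> ring

theorem outage_strictAnti_tendsto_zero_general
    (θ μ : ℝ) (hμ : 0 < μ)
    (hϱ0 : 0 ≤ θ - Real.sqrt (π / 2) * μ⁻¹)
    (ε : ℝ → ℝ)
    (hε : ∀ Ω, ε Ω = 1 - μ * Ω / Real.sqrt (2 * π) * Real.exp (-θ / Ω) *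
        (Real.exp (Real.sqrt (π / 2) / (μ * Ω)) - Real.exp (-(Real.sqrt (π / 2) / (μ * Ω))))) :
    StrictAntiOn ε (Set.Ioi 0) ∧ Tendsto ε atTop (nhds 0) := by
  set c := √(π / 2) * μ⁻¹ with hc_def
  have hc : 0 < c := by positivity
  have hε' (Ω : ℝ) (hΩ : 0 < Ω) :
      ε Ω = 1 - (2 * c)⁻¹ * ∫ s in θ - c..θ + c, exp (-(s * Ω⁻¹)) := by
    have hsqrt : √(2 * π) = 2 * √(π / 2) := by
      rw [show 2 * π = 2 ^ 2 * (π / 2) by ring, sqrt_mul (by positivity), sqrt_sq zero_le_two]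
    rw [hε, ← mul_exp_mul_sub_exp_eq_integral θ c Ω hΩ.ne', hsqrt, hc_def]
    field_simp
  have hF := strictAnti_integral_exp_neg_mul hϱ0 (by linarith : θ - c < θ + c)
  refine ⟨fun x hx y hy hxy => ?_, ?_⟩
  · rw [hε' x hx, hε' y hy]
    have := hF (inv_strictAnti₀ (mem_Ioi.1 hx) hxy)
    gcongr
  · have hlim := ((tendsto_integral_exp_neg_mul_inv_atTop (θ - c) (θ + c)).const_mul
      (2 * c)⁻¹).const_sub 1
    rw [show 1 - (2 * c)⁻¹ * (θ + c - (θ - c)) = 0 by field_simp; ring] at hlim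
    exact hlim.congr' (eventually_gt_atTop 0 |>.mono fun Ω hΩ => (hε' Ω hΩ).symm)

/-- The single-link finite-blocklength outage probability
`ε(Ω) = 1 - (μΩ/√(2π)) e^{-θ/Ω} (e^{√(π/2)/(μΩ)} - e^{-√(π/2)/(μΩ)})` is strictly
decreasing in the average SNR `Ω` on `(0,∞)` and tends to `0` as `Ω → ∞`. -/
theorem outage_strictAnti_tendsto_zero
    (θ μ : ℝ) (hθ : 0 < θ) (hμ : 0 < μ)
    (hϱ0 : 0 ≤ θ - Real.sqrt (π / 2) * μ⁻¹)
    (ε : ℝ → ℝ)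
    (hε : ∀ Ω, ε Ω = 1 - μ * Ω / Real.sqrt (2 * π) * Real.exp (-θ / Ω) *
        (Real.exp (Real.sqrt (π / 2) / (μ * Ω)) - Real.exp (-(Real.sqrt (π / 2) / (μ * Ω))))) :
    StrictAntiOn ε (Set.Ioi 0) ∧ Tendsto ε atTop (nhds 0) :=
  outage_strictAnti_tendsto_zero_general θ μ hμ hϱ0 ε hε
end
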